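/- Let x₀, y₀ ∈ ℝ^d, let U, V be probability measures on ℝ^d whose characteristic functions are strictly positive real numbers at every ω ∈ ℝ^d, and let Λ be a probability measure on ℝ^d. Then PhD(δ_{x₀}⋆U, δ_{y₀}⋆V) = 2 − 2 ∫ cos(⟨ω, x₀ − y₀⟩) dΛ(ω), where δ_z denotes the Dirac measure at z. -/

import Mathlib

open MeasureTheory RealInnerProductSpace

/-- The characteristic function of a measure `P` on `ℝ^d`. -/
noncomputable def charFun {d : ℕ} (P : Measure (EuclideanSpace ℝ (Fin d)))
    (ω : EuclideanSpace ℝ (Fin d)) : ℂ :=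
  ∫ x, Complex.exp (Complex.I * (⟪ω, x⟫ : ℝ)) ∂P

/-- The phase function of a measure `P` on `ℝ^d`. -/
noncomputable def phase {d : ℕ} (P : Measure (EuclideanSpace ℝ (Fin d)))
    (ω : EuclideanSpace ℝ (Fin d)) : ℂ :=
  _root_.charFun P ω / (‖_root_.charFun P ω‖ : ℂ)

/-- The phase discrepancy `PhD(P,Q) = ∫ |ρ_P(ω) − ρ_Q(ω)|² dΛ(ω)`. -/
noncomputable def PhD {d : ℕ} (P Q Λ : Measure (EuclideanSpace ℝ (Fin d))) : ℝ :=
  ∫ ω, (‖phase P ω - phase Q ω‖) ^ 2 ∂Λ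


lemma charFun_dirac_conv {d : ℕ} (x₀ : EuclideanSpace ℝ (Fin d))
    (U : Measure (EuclideanSpace ℝ (Fin d))) [IsProbabilityMeasure U]
    (ω : EuclideanSpace ℝ (Fin d)) :
    _root_.charFun ((Measure.dirac x₀).conv U) ω
      = Complex.exp (Complex.I * (⟪ω, x₀⟫ : ℝ)) * _root_.charFun U ω := by
  have hmap : (Measure.dirac x₀).conv U = U.map (fun y => x₀ + y) := by
    unfold Measure.conv
    rw [Measure.dirac_prod, Measure.map_map (by fun_prop) (by fun_prop)]
    rfl
  have hcont : Continuous fun x : EuclideanSpace ℝ (Fin d) =>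
      Complex.exp (Complex.I * (⟪ω, x⟫ : ℝ)) := by
    exact Complex.continuous_exp.comp ((continuous_const.mul
      (Complex.continuous_ofReal.comp (continuous_const.inner continuous_id))))
  rw [hmap]
  unfold _root_.charFun
  rw [integral_map (by fun_prop) hcont.aestronglyMeasurable]
  simp_rw [inner_add_right, Complex.ofReal_add, mul_add, Complex.exp_add,
    integral_const_mul]

lemma abs_exp_sub_exp (a b : ℝ) :
    (‖Complex.exp (Complex.I * a) - Complex.exp (Complex.I * b)‖)^2
      = 2 - 2 * Real.cos (a - b) := by
  rw [mul_comm Complex.I (a:ℂ), mul_comm Complex.I (b:ℂ), Complex.sq_norm]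
  simp [Complex.exp_mul_I, ← Complex.ofReal_cos, ← Complex.ofReal_sin,
    Complex.normSq_apply, Real.cos_sub]
  nlinarith [Real.sin_sq_add_cos_sq a, Real.sin_sq_add_cos_sq b]

lemma phase_dirac_conv {d : ℕ} (x₀ : EuclideanSpace ℝ (Fin d))
    (U : Measure (EuclideanSpace ℝ (Fin d))) [IsProbabilityMeasure U]
    (hU : ∀ ω : EuclideanSpace ℝ (Fin d), ∃ r : ℝ, 0 < r ∧ _root_.charFun U ω = (r : ℂ))
    (ω : EuclideanSpace ℝ (Fin d)) :
    phase ((Measure.dirac x₀).conv U) ω = Complex.exp (Complex.I * (⟪ω, x₀⟫ : ℝ)) := by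
  obtain ⟨r, hr, hrU⟩ := hU ω
  unfold phase
  rw [charFun_dirac_conv, hrU]
  have habs : ‖Complex.exp (Complex.I * (⟪ω, x₀⟫ : ℝ)) * (r : ℂ)‖ = r := by
    rw [norm_mul, Complex.norm_exp]
    simp [abs_of_pos hr]
  rw [habs]
  rw [mul_div_assoc, div_self (by exact_mod_cast hr.ne'), mul_one]

/-- For point masses corrupted by SPD components `U`, `V`:
`PhD(δ_{x₀}⋆U, δ_{y₀}⋆V) = 2 − 2 ∫ cos⟨ω, x₀ − y₀⟩ dΛ(ω)`. -/
theorem stmt_19 {d : ℕ} (x₀ y₀ : EuclideanSpace ℝ (Fin d))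
    (U V Λ : Measure (EuclideanSpace ℝ (Fin d)))
    [IsProbabilityMeasure U] [IsProbabilityMeasure V] [IsProbabilityMeasure Λ]
    (hU : ∀ ω : EuclideanSpace ℝ (Fin d), ∃ r : ℝ, 0 < r ∧ _root_.charFun U ω = (r : ℂ))
    (hV : ∀ ω : EuclideanSpace ℝ (Fin d), ∃ r : ℝ, 0 < r ∧ _root_.charFun V ω = (r : ℂ)) :
    PhD ((Measure.dirac x₀).conv U) ((Measure.dirac y₀).conv V) Λ =
      2 - 2 * ∫ ω, Real.cos (⟪ω, x₀ - y₀⟫ : ℝ) ∂Λ := by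
  have hpt : ∀ ω : EuclideanSpace ℝ (Fin d),
      (‖phase ((Measure.dirac x₀).conv U) ω
        - phase ((Measure.dirac y₀).conv V) ω‖) ^ 2
      = 2 - 2 * Real.cos (⟪ω, x₀ - y₀⟫ : ℝ) := by
    intro ω
    rw [phase_dirac_conv x₀ U hU, phase_dirac_conv y₀ V hV, abs_exp_sub_exp,
      ← inner_sub_right]
  unfold PhD
  simp_rw [hpt]
  have hint : Integrable (fun ω : EuclideanSpace ℝ (Fin d) =>
      Real.cos (⟪ω, x₀ - y₀⟫ : ℝ)) Λ := by
    refine (integrable_const (1:ℝ)).mono'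
      (Real.continuous_cos.comp (continuous_id.inner continuous_const)).aestronglyMeasurable
      (Filter.Eventually.of_forall fun ω => ?_)
    simpa using Real.abs_cos_le_one _
  rw [integral_sub (integrable_const 2) (hint.const_mul 2), integral_const,
    MeasureTheory.integral_const_mul]
  simp
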